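/- Let x ≥ 1 be real and let v : ℝ → [0,∞) be a smooth function with support contained in [−2, 2] and with v(ξ) = 1 for all ξ ∈ [−1, 1]. Define v_1(ξ) := v(ξ/x^{1/3}) and, for each positive integer a, v_2^{(a)}(ξ) := v(ξ·(a/x)^{1/2}). Then for every positive integer n ≤ x one has d_3(n) = Σ_{abc = n} [ v_1(a)·v_1(b)·v_1(c) − 3·v_1(a)·v_1(b) + 3·v_1(a)·v_2^{(a)}(b)·(2 − v_2^{(a)}(c)) ], where the sum runs over all ordered triples (a,b,c) of positive integers with abc = n. -/

import Mathlib

noncomputable section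

/-- The finite set of ordered triples `(a, b, c)` of (necessarily positive, for `n ≥ 1`)
natural numbers with `a*b*c = n`. -/
def tripleSet (n : ℕ) : Finset (ℕ × ℕ × ℕ) :=
  (Finset.range (n + 1) ×ˢ Finset.range (n + 1) ×ˢ Finset.range (n + 1)).filter
    (fun t : ℕ × ℕ × ℕ => t.1 * t.2.1 * t.2.2 = n)

/-- `d₃ n` is the number of ordered triples `(a, b, c)` of positive integers with `a*b*c = n`. -/
def d₃ (n : ℕ) : ℕ := (tripleSet n).card

lemma mem_ts {n : ℕ} {t : ℕ × ℕ × ℕ} :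
    t ∈ tripleSet n ↔ (t.1 ≤ n ∧ t.2.1 ≤ n ∧ t.2.2 ≤ n) ∧ t.1 * t.2.1 * t.2.2 = n := by
  simp [tripleSet, Nat.lt_succ_iff]

lemma key_alg (α β γ p q r s u w : ℝ)
    (h1 : α = 1 ∨ β = 1 ∨ γ = 1) (h2 : p = 1 ∨ q = 1) (h3 : r = 1 ∨ s = 1)
    (h4 : u = 1 ∨ w = 1) :
    (α*β*γ - 3*α*β + 3*α*p*(2-q)) + (α*γ*β - 3*α*γ + 3*α*q*(2-p))
    + (β*α*γ - 3*β*α + 3*β*r*(2-s)) + (β*γ*α - 3*β*γ + 3*β*s*(2-r))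
    + (γ*α*β - 3*γ*α + 3*γ*u*(2-w)) + (γ*β*α - 3*γ*β + 3*γ*w*(2-u)) = 6 := by
  rcases h1 with h|h|h <;> rcases h2 with h2|h2 <;> rcases h3 with h3|h3 <;>
    rcases h4 with h4|h4 <;> subst h h2 h3 h4 <;> ring

/-- Permutation invariance of sums over `tripleSet n`. -/
lemma sum_perm (n : ℕ) (f : ℕ × ℕ × ℕ → ℝ) (σ : Equiv.Perm (ℕ × ℕ × ℕ))
    (hσ : ∀ t, t ∈ tripleSet n ↔ σ t ∈ tripleSet n) :
    ∑ t ∈ tripleSet n, f (σ t) = ∑ t ∈ tripleSet n, f t :=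
  Finset.sum_equiv σ hσ (fun _ _ => rfl)

def σ1 : Equiv.Perm (ℕ × ℕ × ℕ) :=
  ⟨fun t => (t.1, t.2.2, t.2.1), fun t => (t.1, t.2.2, t.2.1), fun _ => rfl, fun _ => rfl⟩
def σ2 : Equiv.Perm (ℕ × ℕ × ℕ) :=
  ⟨fun t => (t.2.1, t.1, t.2.2), fun t => (t.2.1, t.1, t.2.2), fun _ => rfl, fun _ => rfl⟩
def σ3 : Equiv.Perm (ℕ × ℕ × ℕ) :=
  ⟨fun t => (t.2.1, t.2.2, t.1), fun t => (t.2.2, t.1, t.2.1), fun _ => rfl, fun _ => rfl⟩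
def σ4 : Equiv.Perm (ℕ × ℕ × ℕ) :=
  ⟨fun t => (t.2.2, t.1, t.2.1), fun t => (t.2.1, t.2.2, t.1), fun _ => rfl, fun _ => rfl⟩
def σ5 : Equiv.Perm (ℕ × ℕ × ℕ) :=
  ⟨fun t => (t.2.2, t.2.1, t.1), fun t => (t.2.2, t.2.1, t.1), fun _ => rfl, fun _ => rfl⟩

lemma mem_σ1 {n : ℕ} (t : ℕ × ℕ × ℕ) : t ∈ tripleSet n ↔ σ1 t ∈ tripleSet n := by
  obtain ⟨a, b, c⟩ := t
  simp only [mem_ts, σ1, Equiv.coe_fn_mk]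
  constructor <;> rintro ⟨⟨h1, h2, h3⟩, h4⟩ <;> exact ⟨⟨h1, h3, h2⟩, by rw [← h4]; ring⟩
lemma mem_σ2 {n : ℕ} (t : ℕ × ℕ × ℕ) : t ∈ tripleSet n ↔ σ2 t ∈ tripleSet n := by
  obtain ⟨a, b, c⟩ := t
  simp only [mem_ts, σ2, Equiv.coe_fn_mk]
  constructor <;> rintro ⟨⟨h1, h2, h3⟩, h4⟩ <;> exact ⟨⟨h2, h1, h3⟩, by rw [← h4]; ring⟩
lemma mem_σ3 {n : ℕ} (t : ℕ × ℕ × ℕ) : t ∈ tripleSet n ↔ σ3 t ∈ tripleSet n := by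
  obtain ⟨a, b, c⟩ := t
  simp only [mem_ts, σ3, Equiv.coe_fn_mk]
  constructor <;> rintro ⟨⟨h1, h2, h3⟩, h4⟩
  · exact ⟨⟨h2, h3, h1⟩, by rw [← h4]; ring⟩
  · exact ⟨⟨h3, h1, h2⟩, by rw [← h4]; ring⟩
lemma mem_σ4 {n : ℕ} (t : ℕ × ℕ × ℕ) : t ∈ tripleSet n ↔ σ4 t ∈ tripleSet n := by
  obtain ⟨a, b, c⟩ := t
  simp only [mem_ts, σ4, Equiv.coe_fn_mk]
  constructor <;> rintro ⟨⟨h1, h2, h3⟩, h4⟩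
  · exact ⟨⟨h3, h1, h2⟩, by rw [← h4]; ring⟩
  · exact ⟨⟨h2, h3, h1⟩, by rw [← h4]; ring⟩
lemma mem_σ5 {n : ℕ} (t : ℕ × ℕ × ℕ) : t ∈ tripleSet n ↔ σ5 t ∈ tripleSet n := by
  obtain ⟨a, b, c⟩ := t
  simp only [mem_ts, σ5, Equiv.coe_fn_mk]
  constructor <;> rintro ⟨⟨h1, h2, h3⟩, h4⟩ <;> exact ⟨⟨h3, h2, h1⟩, by rw [← h4]; ring⟩

/-- If the symmetrization of `f` over the six coordinate permutations equals `6` on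
`tripleSet n`, then the count `d₃ n` equals the sum of `f`. -/
lemma six_card (n : ℕ) (f : ℕ × ℕ × ℕ → ℝ)
    (hpt : ∀ t ∈ tripleSet n,
      f t + f (σ1 t) + f (σ2 t) + f (σ3 t) + f (σ4 t) + f (σ5 t) = 6) :
    (d₃ n : ℝ) = ∑ t ∈ tripleSet n, f t := by
  have e1 := sum_perm n f σ1 (fun t => mem_σ1 t)
  have e2 := sum_perm n f σ2 (fun t => mem_σ2 t)
  have e3 := sum_perm n f σ3 (fun t => mem_σ3 t)
  have e4 := sum_perm n f σ4 (fun t => mem_σ4 t)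
  have e5 := sum_perm n f σ5 (fun t => mem_σ5 t)
  have big : ∑ t ∈ tripleSet n,
      (f t + f (σ1 t) + f (σ2 t) + f (σ3 t) + f (σ4 t) + f (σ5 t)) =
      6 * ∑ t ∈ tripleSet n, f t := by
    simp only [Finset.sum_add_distrib, e1, e2, e3, e4, e5]
    ring
  have big2 : ∑ t ∈ tripleSet n,
      (f t + f (σ1 t) + f (σ2 t) + f (σ3 t) + f (σ4 t) + f (σ5 t)) =
      6 * (d₃ n : ℝ) := by
    rw [Finset.sum_congr rfl hpt, Finset.sum_const, d₃]
    push_cast; ring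
  have := big2.symm.trans big
  linarith

/-- Smooth decomposition of the ternary divisor function: with `v₁(ξ) = v(ξ/x^{1/3})` and
`v₂^{(a)}(ξ) = v(ξ √(a/x))`, for every `1 ≤ n ≤ x`,
`d₃(n) = Σ_{abc=n} (v₁(a)v₁(b)v₁(c) - 3v₁(a)v₁(b) + 3v₁(a)v₂^{(a)}(b)(2 - v₂^{(a)}(c)))`. -/
theorem d3_smooth_decomposition (x : ℝ) (hx : 1 ≤ x)
    (v : ℝ → ℝ) (hv : ContDiff ℝ (⊤ : ℕ∞) v) (hnn : ∀ ξ, 0 ≤ v ξ)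
    (hsupp : tsupport v ⊆ Set.Icc (-2) 2) (hone : ∀ ξ ∈ Set.Icc (-1 : ℝ) 1, v ξ = 1) :
    ∀ n : ℕ, 1 ≤ n → (n : ℝ) ≤ x →
      (d₃ n : ℝ) = ∑ t ∈ tripleSet n,
        (v ((t.1 : ℝ) / x ^ ((1 : ℝ) / 3)) * v ((t.2.1 : ℝ) / x ^ ((1 : ℝ) / 3)) *
            v ((t.2.2 : ℝ) / x ^ ((1 : ℝ) / 3))
          - 3 * v ((t.1 : ℝ) / x ^ ((1 : ℝ) / 3)) * v ((t.2.1 : ℝ) / x ^ ((1 : ℝ) / 3))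
          + 3 * v ((t.1 : ℝ) / x ^ ((1 : ℝ) / 3)) *
              v ((t.2.1 : ℝ) * Real.sqrt ((t.1 : ℝ) / x)) *
              (2 - v ((t.2.2 : ℝ) * Real.sqrt ((t.1 : ℝ) / x)))) := by
  intro n hn hnx
  have hx0 : (0 : ℝ) < x := by linarith
  have hX : 0 < x ^ ((1 : ℝ) / 3) := Real.rpow_pos_of_pos hx0 _
  refine six_card n (fun t =>
    v ((t.1 : ℝ) / x ^ ((1 : ℝ) / 3)) * v ((t.2.1 : ℝ) / x ^ ((1 : ℝ) / 3)) *
        v ((t.2.2 : ℝ) / x ^ ((1 : ℝ) / 3))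
      - 3 * v ((t.1 : ℝ) / x ^ ((1 : ℝ) / 3)) * v ((t.2.1 : ℝ) / x ^ ((1 : ℝ) / 3))
      + 3 * v ((t.1 : ℝ) / x ^ ((1 : ℝ) / 3)) *
          v ((t.2.1 : ℝ) * Real.sqrt ((t.1 : ℝ) / x)) *
          (2 - v ((t.2.2 : ℝ) * Real.sqrt ((t.1 : ℝ) / x)))) ?_
  -- value of v on [0,1]
  have hv1 : ∀ ξ : ℝ, 0 ≤ ξ → ξ ≤ 1 → v ξ = 1 := fun ξ h0 h1 =>
    hone ξ ⟨by linarith, h1⟩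
  -- if a^3 ≤ x then v(a/x^{1/3}) = 1
  have hA : ∀ a : ℕ, ((a : ℝ)) ^ 3 ≤ x → v ((a : ℝ) / x ^ ((1 : ℝ) / 3)) = 1 := by
    intro a h
    have h1 : (((a : ℝ)) ^ 3) ^ ((1 : ℝ) / 3) ≤ x ^ ((1 : ℝ) / 3) :=
      Real.rpow_le_rpow (by positivity) h (by norm_num)
    have h2 : (((a : ℝ)) ^ 3) ^ ((1 : ℝ) / 3) = (a : ℝ) := by
      rw [← Real.rpow_natCast (a : ℝ) 3, ← Real.rpow_mul (Nat.cast_nonneg a)]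
      norm_num
    rw [h2] at h1
    exact hv1 _ (by positivity) ((div_le_one hX).mpr h1)
  -- if b^2 * a ≤ x then v(b * √(a/x)) = 1
  have hB : ∀ b a : ℕ, ((b : ℝ)) ^ 2 * a ≤ x → v ((b : ℝ) * Real.sqrt ((a : ℝ) / x)) = 1 := by
    intro b a h
    have h1 : (b : ℝ) * Real.sqrt ((a : ℝ) / x) = Real.sqrt ((b : ℝ) ^ 2 * ((a : ℝ) / x)) := by
      rw [Real.sqrt_mul (by positivity), Real.sqrt_sq (Nat.cast_nonneg b)]
    have h2 : (b : ℝ) ^ 2 * ((a : ℝ) / x) ≤ 1 := by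
      rw [show (b : ℝ) ^ 2 * ((a : ℝ) / x) = ((b : ℝ) ^ 2 * a) / x by ring, div_le_one hx0]
      exact h
    have h3 : Real.sqrt ((b : ℝ) ^ 2 * ((a : ℝ) / x)) ≤ 1 := by
      rw [show (1 : ℝ) = Real.sqrt 1 by simp]
      exact Real.sqrt_le_sqrt h2
    rw [h1]
    exact hv1 _ (Real.sqrt_nonneg _) h3
  -- product comparison helpers
  have cube : ∀ p q r : ℝ, 0 ≤ p → p ≤ q → p ≤ r → p * q * r ≤ x → p ^ 3 ≤ x := by
    intro p q r h0 h1 h2 hle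
    have hq : 0 ≤ q := h0.trans h1
    have s1 : p * p ≤ p * q := mul_le_mul_of_nonneg_left h1 h0
    have s2 : p * p * p ≤ p * q * r := mul_le_mul s1 h2 h0 (mul_nonneg h0 hq)
    calc p ^ 3 = p * p * p := by ring
      _ ≤ p * q * r := s2
      _ ≤ x := hle
  have sqr : ∀ p q r : ℝ, 0 ≤ p → 0 ≤ q → q ≤ r → p * q * r ≤ x → q ^ 2 * p ≤ x := by
    intro p q r h0 hq hqr hle
    have s1 : p * q * q ≤ p * q * r := mul_le_mul_of_nonneg_left hqr (mul_nonneg h0 hq)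
    calc q ^ 2 * p = p * q * q := by ring
      _ ≤ p * q * r := s1
      _ ≤ x := hle
  rintro ⟨a, b, c⟩ ht
  rw [mem_ts] at ht
  obtain ⟨-, h4⟩ := ht
  simp only at h4
  have ha0 : 1 ≤ a := Nat.one_le_iff_ne_zero.mpr (by rintro rfl; simp at h4; omega)
  have hb0 : 1 ≤ b := Nat.one_le_iff_ne_zero.mpr (by rintro rfl; simp at h4; omega)
  have hc0 : 1 ≤ c := Nat.one_le_iff_ne_zero.mpr (by rintro rfl; simp at h4; omega)
  have habc : (a : ℝ) * b * c ≤ x := by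
    have : ((a * b * c : ℕ) : ℝ) ≤ x := by rw [h4]; exact hnx
    push_cast at this; linarith
  have hra : (0 : ℝ) ≤ (a : ℝ) := Nat.cast_nonneg a
  have hrb : (0 : ℝ) ≤ (b : ℝ) := Nat.cast_nonneg b
  have hrc : (0 : ℝ) ≤ (c : ℝ) := Nat.cast_nonneg c
  have h1 : v ((a : ℝ) / x ^ ((1 : ℝ) / 3)) = 1 ∨ v ((b : ℝ) / x ^ ((1 : ℝ) / 3)) = 1 ∨
      v ((c : ℝ) / x ^ ((1 : ℝ) / 3)) = 1 := by
    rcases le_total a b with hab | hab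
    · rcases le_total a c with hac | hac
      · exact Or.inl (hA a (cube (a : ℝ) b c hra (by exact_mod_cast hab)
          (by exact_mod_cast hac) habc))
      · refine Or.inr (Or.inr (hA c (cube (c : ℝ) a b hrc (by exact_mod_cast hac)
          (by exact_mod_cast hac.trans hab) ?_)))
        calc (c : ℝ) * a * b = (a : ℝ) * b * c := by ring
          _ ≤ x := habc
    · rcases le_total b c with hbc | hbc
      · refine Or.inr (Or.inl (hA b (cube (b : ℝ) a c hrb (by exact_mod_cast hab)
          (by exact_mod_cast hbc) ?_)))
        calc (b : ℝ) * a * c = (a : ℝ) * b * c := by ring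
          _ ≤ x := habc
      · refine Or.inr (Or.inr (hA c (cube (c : ℝ) b a hrc (by exact_mod_cast hbc)
          (by exact_mod_cast (hbc.trans hab)) ?_)))
        calc (c : ℝ) * b * a = (a : ℝ) * b * c := by ring
          _ ≤ x := habc
  have h2 : v ((b : ℝ) * Real.sqrt ((a : ℝ) / x)) = 1 ∨
      v ((c : ℝ) * Real.sqrt ((a : ℝ) / x)) = 1 := by
    rcases le_total b c with hbc | hbc
    · exact Or.inl (hB b a (sqr (a : ℝ) b c hra hrb (by exact_mod_cast hbc) habc))
    · refine Or.inr (hB c a (sqr (a : ℝ) c b hra hrc (by exact_mod_cast hbc) ?_))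
      calc (a : ℝ) * c * b = (a : ℝ) * b * c := by ring
        _ ≤ x := habc
  have h3 : v ((a : ℝ) * Real.sqrt ((b : ℝ) / x)) = 1 ∨
      v ((c : ℝ) * Real.sqrt ((b : ℝ) / x)) = 1 := by
    rcases le_total a c with hac | hac
    · refine Or.inl (hB a b (sqr (b : ℝ) a c hrb hra (by exact_mod_cast hac) ?_))
      calc (b : ℝ) * a * c = (a : ℝ) * b * c := by ring
        _ ≤ x := habc
    · refine Or.inr (hB c b (sqr (b : ℝ) c a hrb hrc (by exact_mod_cast hac) ?_))
      calc (b : ℝ) * c * a = (a : ℝ) * b * c := by ring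
        _ ≤ x := habc
  have h4' : v ((a : ℝ) * Real.sqrt ((c : ℝ) / x)) = 1 ∨
      v ((b : ℝ) * Real.sqrt ((c : ℝ) / x)) = 1 := by
    rcases le_total a b with hab | hab
    · refine Or.inl (hB a c (sqr (c : ℝ) a b hrc hra (by exact_mod_cast hab) ?_))
      calc (c : ℝ) * a * b = (a : ℝ) * b * c := by ring
        _ ≤ x := habc
    · refine Or.inr (hB b c (sqr (c : ℝ) b a hrc hrb (by exact_mod_cast hab) ?_))
      calc (c : ℝ) * b * a = (a : ℝ) * b * c := by ring
        _ ≤ x := habc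
  simp only [σ1, σ2, σ3, σ4, σ5, Equiv.coe_fn_mk]
  exact key_alg (v ((a : ℝ) / x ^ ((1 : ℝ) / 3))) (v ((b : ℝ) / x ^ ((1 : ℝ) / 3)))
    (v ((c : ℝ) / x ^ ((1 : ℝ) / 3)))
    (v ((b : ℝ) * Real.sqrt ((a : ℝ) / x))) (v ((c : ℝ) * Real.sqrt ((a : ℝ) / x)))
    (v ((a : ℝ) * Real.sqrt ((b : ℝ) / x))) (v ((c : ℝ) * Real.sqrt ((b : ℝ) / x)))
    (v ((a : ℝ) * Real.sqrt ((c : ℝ) / x))) (v ((b : ℝ) * Real.sqrt ((c : ℝ) / x)))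
    h1 h2 h3 h4'
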